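/- arXiv:1611.00755 — 6 statements merged into one kernel-verified Lean document; each statement's English description precedes it below -/
import Mathlib

section
/- Let M be a (possibly asymmetric) n×n real matrix with ‖M‖₂ ≤ 1, and let U_X := (X + Xᵀ)/2 denote the symmetrization of a matrix X. Then 0 ⪯ I − U_{M²} ⪯ 2(I − U_M²) ⪯ 4(I − U_M), where U_M² means the square of the symmetric matrix U_M. -/
open Matrix

/-- The spectral (ℓ₂ operator) norm of a real matrix. -/
noncomputable def sNorm {m n : ℕ} (M : Matrix (Fin m) (Fin n) ℝ) : ℝ :=
  ‖LinearMap.toContinuousLinearMap (Matrix.toEuclideanLin M)‖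

/-- The symmetrization U_X = (X + Xᵀ)/2. -/
noncomputable def symmPart {n : ℕ} (A : Matrix (Fin n) (Fin n) ℝ) : Matrix (Fin n) (Fin n) ℝ :=
  (2⁻¹ : ℝ) • (A + Aᵀ)

lemma herm_smul {n : ℕ} (c : ℝ) {A : Matrix (Fin n) (Fin n) ℝ} (h : A.IsHermitian) :
    (c • A).IsHermitian := by
  unfold Matrix.IsHermitian at *
  rw [Matrix.conjTranspose_smul, h]
  simp

lemma dot_self_nonneg {n : ℕ} (x : Fin n → ℝ) : 0 ≤ x ⬝ᵥ x := by
  apply Finset.sum_nonneg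
  intro i _
  exact mul_self_nonneg _

lemma cs {n : ℕ} (x y : Fin n → ℝ) : (x ⬝ᵥ y) ^ 2 ≤ (x ⬝ᵥ x) * (y ⬝ᵥ y) := by
  simpa [dotProduct, sq] using Finset.sum_mul_sq_le_sq_mul_sq Finset.univ x y

lemma mulVec_dot_le {n : ℕ} (M : Matrix (Fin n) (Fin n) ℝ) (hnorm : sNorm M ≤ 1)
    (x : Fin n → ℝ) : (M *ᵥ x) ⬝ᵥ (M *ᵥ x) ≤ x ⬝ᵥ x := by
  set L := LinearMap.toContinuousLinearMap (Matrix.toEuclideanLin M)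
  set y : EuclideanSpace ℝ (Fin n) := (WithLp.equiv 2 (Fin n → ℝ)).symm x
  have h1 : ‖L y‖ ≤ ‖y‖ := by
    calc ‖L y‖ ≤ ‖L‖ * ‖y‖ := L.le_opNorm y
    _ ≤ 1 * ‖y‖ := by
        apply mul_le_mul_of_nonneg_right hnorm (norm_nonneg y)
    _ = ‖y‖ := one_mul _
  have hLy : L y = (WithLp.equiv 2 (Fin n → ℝ)).symm (M *ᵥ x) := by
    simp [L, y, Matrix.toEuclideanLin_apply]
  have hn : ∀ z : Fin n → ℝ,
      ‖(WithLp.equiv 2 (Fin n → ℝ)).symm z‖ ^ 2 = z ⬝ᵥ z := by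
    intro z
    rw [EuclideanSpace.norm_eq]
    rw [Real.sq_sqrt (by positivity)]
    simp [dotProduct, sq]
  have := pow_le_pow_left₀ (norm_nonneg (L y)) h1 2
  rwa [hLy, hn, hn] at this

lemma transpose_mulVec_dot_le {n : ℕ} (M : Matrix (Fin n) (Fin n) ℝ) (hnorm : sNorm M ≤ 1)
    (x : Fin n → ℝ) : (Mᵀ *ᵥ x) ⬝ᵥ (Mᵀ *ᵥ x) ≤ x ⬝ᵥ x := by
  set y := Mᵀ *ᵥ x with hy
  have key : (y ⬝ᵥ y) ^ 2 ≤ (y ⬝ᵥ y) * (x ⬝ᵥ x) := by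
    have h1 : y ⬝ᵥ y = (M *ᵥ y) ⬝ᵥ x := by
      rw [dotProduct_comm (M *ᵥ y) x, Matrix.dotProduct_mulVec x M y,
        ← Matrix.mulVec_transpose, ← hy]
    calc (y ⬝ᵥ y) ^ 2 = ((M *ᵥ y) ⬝ᵥ x) ^ 2 := by rw [h1]
      _ ≤ ((M *ᵥ y) ⬝ᵥ (M *ᵥ y)) * (x ⬝ᵥ x) := cs _ _
      _ ≤ (y ⬝ᵥ y) * (x ⬝ᵥ x) :=
          mul_le_mul_of_nonneg_right (mulVec_dot_le M hnorm y) (dot_self_nonneg x)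
  rcases eq_or_lt_of_le (dot_self_nonneg y) with h | h
  · rw [← h]; exact dot_self_nonneg x
  · nlinarith [key]

/-- If ‖M‖₂ ≤ 1 then 0 ⪯ I − U_{M²} ⪯ 2(I − U_M²) ⪯ 4(I − U_M). -/
theorem stmt2 {n : ℕ} (M : Matrix (Fin n) (Fin n) ℝ) (hnorm : sNorm M ≤ 1) :
    ((1 : Matrix (Fin n) (Fin n) ℝ) - symmPart (M ^ 2)).PosSemidef ∧
    ((2 : ℝ) • ((1 : Matrix (Fin n) (Fin n) ℝ) - symmPart M ^ 2)
      - ((1 : Matrix (Fin n) (Fin n) ℝ) - symmPart (M ^ 2))).PosSemidef ∧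
    ((4 : ℝ) • ((1 : Matrix (Fin n) (Fin n) ℝ) - symmPart M)
      - (2 : ℝ) • ((1 : Matrix (Fin n) (Fin n) ℝ) - symmPart M ^ 2)).PosSemidef := by
  have hsymm : ∀ A : Matrix (Fin n) (Fin n) ℝ, (symmPart A).IsHermitian := by
    intro A
    ext i j
    simp [symmPart, Matrix.IsHermitian, mul_comm, add_comm, Matrix.conjTranspose_apply,
      Matrix.transpose_apply]
    ring
  have hU := hsymm M
  have hV := hsymm (M ^ 2)
  -- quadratic form computations
  have quad : ∀ x : Fin n → ℝ, x ⬝ᵥ (symmPart (M ^ 2) *ᵥ x) = (Mᵀ *ᵥ x) ⬝ᵥ (M *ᵥ x) := by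
    intro x
    simp only [symmPart, Matrix.smul_mulVec, Matrix.add_mulVec, dotProduct_smul,
      dotProduct_add, pow_two, Matrix.transpose_mul, Matrix.mulVec_mulVec]
    rw [show (Mᵀ * Mᵀ) *ᵥ x = Mᵀ *ᵥ (Mᵀ *ᵥ x) by rw [Matrix.mulVec_mulVec],
      show (M * M) *ᵥ x = M *ᵥ (M *ᵥ x) by rw [Matrix.mulVec_mulVec]]
    rw [Matrix.dotProduct_mulVec x Mᵀ, Matrix.vecMul_transpose]
    rw [Matrix.dotProduct_mulVec x M, ← Matrix.mulVec_transpose]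
    rw [dotProduct_comm ((M *ᵥ x)) (Mᵀ *ᵥ x)]
    rw [smul_eq_mul]
    ring
  have quadU : ∀ x : Fin n → ℝ, symmPart M *ᵥ x = (2⁻¹ : ℝ) • (M *ᵥ x + Mᵀ *ᵥ x) := by
    intro x
    simp [symmPart, Matrix.smul_mulVec, Matrix.add_mulVec]
  have hMM : ∀ x : Fin n → ℝ, (M *ᵥ x) ⬝ᵥ (M *ᵥ x) ≤ x ⬝ᵥ x := mulVec_dot_le M hnorm
  have hMT : ∀ x : Fin n → ℝ, (Mᵀ *ᵥ x) ⬝ᵥ (Mᵀ *ᵥ x) ≤ x ⬝ᵥ x := transpose_mulVec_dot_le M hnorm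
  refine ⟨posSemidef_iff_dotProduct_mulVec.mpr ⟨?_, ?_⟩, posSemidef_iff_dotProduct_mulVec.mpr ⟨?_, ?_⟩,
    posSemidef_iff_dotProduct_mulVec.mpr ⟨?_, ?_⟩⟩
  · exact Matrix.isHermitian_one.sub hV
  · intro x
    simp only [star_trivial, Matrix.sub_mulVec, Matrix.one_mulVec, dotProduct_sub, quad]
    have h := cs (Mᵀ *ᵥ x) (M *ᵥ x)
    have h2 : ((Mᵀ *ᵥ x) ⬝ᵥ (M *ᵥ x)) ^ 2 ≤ (x ⬝ᵥ x) ^ 2 := by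
      calc ((Mᵀ *ᵥ x) ⬝ᵥ (M *ᵥ x)) ^ 2 ≤ ((Mᵀ *ᵥ x) ⬝ᵥ (Mᵀ *ᵥ x)) * ((M *ᵥ x) ⬝ᵥ (M *ᵥ x)) := h
        _ ≤ (x ⬝ᵥ x) * (x ⬝ᵥ x) := by
            apply mul_le_mul (hMT x) (hMM x) (dot_self_nonneg _) (dot_self_nonneg _)
        _ = (x ⬝ᵥ x) ^ 2 := (sq _).symm
    have h3 : (Mᵀ *ᵥ x) ⬝ᵥ (M *ᵥ x) ≤ x ⬝ᵥ x := by
      nlinarith [dot_self_nonneg x, abs_le_of_sq_le_sq' h2 (dot_self_nonneg x)]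
    linarith
  · exact (herm_smul 2 (Matrix.isHermitian_one.sub (hU.pow 2))).sub (Matrix.isHermitian_one.sub hV)
  · intro x
    simp only [star_trivial, Matrix.sub_mulVec, Matrix.one_mulVec, Matrix.smul_mulVec,
      dotProduct_sub, dotProduct_smul, quad, smul_eq_mul]
    have hsq : x ⬝ᵥ (symmPart M ^ 2 *ᵥ x) = (symmPart M *ᵥ x) ⬝ᵥ (symmPart M *ᵥ x) := by
      rw [pow_two, ← Matrix.mulVec_mulVec, Matrix.dotProduct_mulVec x, ← Matrix.mulVec_transpose,
        (show (symmPart M)ᵀ = symmPart M by rw [← Matrix.conjTranspose_eq_transpose_of_trivial]; exact hU)]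
    rw [hsq, quadU]
    have expand : ((2⁻¹ : ℝ) • (M *ᵥ x + Mᵀ *ᵥ x)) ⬝ᵥ ((2⁻¹ : ℝ) • (M *ᵥ x + Mᵀ *ᵥ x)) =
        (4⁻¹ : ℝ) * ((M *ᵥ x) ⬝ᵥ (M *ᵥ x) + 2 * ((M *ᵥ x) ⬝ᵥ (Mᵀ *ᵥ x)) +
          (Mᵀ *ᵥ x) ⬝ᵥ (Mᵀ *ᵥ x)) := by
      simp only [smul_dotProduct, dotProduct_smul, dotProduct_add, add_dotProduct, smul_eq_mul]
      rw [dotProduct_comm (Mᵀ *ᵥ x) (M *ᵥ x)]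
      ring
    rw [expand]
    have hcomm : (Mᵀ *ᵥ x) ⬝ᵥ (M *ᵥ x) = (M *ᵥ x) ⬝ᵥ (Mᵀ *ᵥ x) := dotProduct_comm _ _
    rw [hcomm]
    nlinarith [hMM x, hMT x]
  · exact (herm_smul 4 (Matrix.isHermitian_one.sub hU)).sub
      (herm_smul 2 (Matrix.isHermitian_one.sub (hU.pow 2)))
  · intro x
    simp only [star_trivial, Matrix.sub_mulVec, Matrix.one_mulVec, Matrix.smul_mulVec,
      dotProduct_sub, dotProduct_smul, smul_eq_mul]
    have hsq : x ⬝ᵥ (symmPart M ^ 2 *ᵥ x) = (symmPart M *ᵥ x) ⬝ᵥ (symmPart M *ᵥ x) := by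
      rw [pow_two, ← Matrix.mulVec_mulVec, Matrix.dotProduct_mulVec x, ← Matrix.mulVec_transpose,
        (show (symmPart M)ᵀ = symmPart M by rw [← Matrix.conjTranspose_eq_transpose_of_trivial]; exact hU)]
    have hcross : x ⬝ᵥ (symmPart M *ᵥ x) = (symmPart M *ᵥ x) ⬝ᵥ x := dotProduct_comm _ _
    have key : 0 ≤ (x - symmPart M *ᵥ x) ⬝ᵥ (x - symmPart M *ᵥ x) := dot_self_nonneg _
    simp only [dotProduct_sub, sub_dotProduct] at key
    rw [hsq]
    nlinarith [key, hcross]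
end

section
/- Let L be an n×n real matrix such that its symmetric part U := (L + Lᵀ)/2 is positive semidefinite and ker(L) = ker(Lᵀ) = ker(U). Then U ⪯ Lᵀ U† L, where U† is the Moore–Penrose pseudoinverse of U. -/
open Matrix

/-- `Ap` satisfies the four Moore–Penrose equations for `A`
    (these uniquely characterize the pseudoinverse). -/
def IsMoorePenrose {n : ℕ} (A Ap : Matrix (Fin n) (Fin n) ℝ) : Prop :=
  A * Ap * A = A ∧ Ap * A * Ap = Ap ∧ (A * Ap)ᵀ = A * Ap ∧ (Ap * A)ᵀ = Ap * A

private lemma eq_of_mulVec_eq' {n : ℕ} {M N : Matrix (Fin n) (Fin n) ℝ}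
    (h : ∀ v, M *ᵥ v = N *ᵥ v) : M = N := by
  ext i j
  have := congrFun (h (Pi.single j 1)) i
  simpa [Matrix.mulVec_single_one] using this

/-- Uniqueness of the Moore–Penrose pseudoinverse. -/
private lemma mp_unique {n : ℕ} {A B C : Matrix (Fin n) (Fin n) ℝ}
    (hB : IsMoorePenrose A B) (hC : IsMoorePenrose A C) : B = C := by
  obtain ⟨hB1, hB2, hB3, hB4⟩ := hB
  obtain ⟨hC1, hC2, hC3, hC4⟩ := hC
  have hAB : A * B = A * C := by
    calc A * B = (A * C * A) * B := by rw [hC1]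
    _ = (A * C) * (A * B) := by simp only [Matrix.mul_assoc]
    _ = (A * C)ᵀ * (A * B)ᵀ := by rw [hC3, hB3]
    _ = ((A * B) * (A * C))ᵀ := (transpose_mul _ _).symm
    _ = ((A * B * A) * C)ᵀ := by simp only [Matrix.mul_assoc]
    _ = (A * C)ᵀ := by rw [hB1]
    _ = A * C := hC3
  have hBA : B * A = C * A := by
    calc B * A = B * (A * C * A) := by rw [hC1]
    _ = (B * A) * (C * A) := by simp only [Matrix.mul_assoc]
    _ = (B * A)ᵀ * (C * A)ᵀ := by rw [hC4, hB4]
    _ = ((C * A) * (B * A))ᵀ := (transpose_mul _ _).symm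
    _ = (C * (A * B * A))ᵀ := by simp only [Matrix.mul_assoc]
    _ = (C * A)ᵀ := by rw [hB1]
    _ = C * A := hC4
  calc B = B * A * B := hB2.symm
  _ = B * (A * C) := by rw [Matrix.mul_assoc, hAB]
  _ = (B * A) * C := by rw [Matrix.mul_assoc]
  _ = C * A * C := by rw [hBA]
  _ = C := hC2

/-- If U = (L + Lᵀ)/2 is PSD and ker L = ker Lᵀ = ker U, then U ⪯ Lᵀ U† L. -/
theorem stmt4 {n : ℕ} (L : Matrix (Fin n) (Fin n) ℝ)
    (hU : (symmPart L).PosSemidef)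
    (hker1 : LinearMap.ker L.mulVecLin = LinearMap.ker Lᵀ.mulVecLin)
    (hker2 : LinearMap.ker L.mulVecLin = LinearMap.ker (symmPart L).mulVecLin)
    (Up : Matrix (Fin n) (Fin n) ℝ) (hUp : IsMoorePenrose (symmPart L) Up) :
    (Lᵀ * Up * L - symmPart L).PosSemidef := by
  set U := symmPart L with hUdef
  have hUs : Uᵀ = U := by
    simp [hUdef, symmPart, transpose_smul, transpose_add, transpose_transpose, add_comm]
  obtain ⟨h1, h2, h3, h4⟩ := hUp
  -- Upᵀ is also a Moore–Penrose inverse of U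
  have e4 : U * Upᵀ = Up * U := by
    conv_rhs => rw [← h4]
    rw [transpose_mul, hUs]
  have e3 : Upᵀ * U = U * Up := by
    conv_rhs => rw [← h3]
    rw [transpose_mul, hUs]
  have hmpT : IsMoorePenrose U Upᵀ := by
    refine ⟨?_, ?_, ?_, ?_⟩
    · have h := congrArg transpose h1
      simp only [transpose_mul, hUs] at h
      rw [Matrix.mul_assoc]
      simpa only [Matrix.mul_assoc] using h
    · have h := congrArg transpose h2
      simp only [transpose_mul, hUs] at h
      rw [Matrix.mul_assoc]
      simpa only [Matrix.mul_assoc] using h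
    · rw [e4]; exact h4
    · rw [e3]; exact h3
  have hsym : Upᵀ = Up := mp_unique hmpT ⟨h1, h2, h3, h4⟩
  -- kernel inclusions: anything killed by U is killed by L and Lᵀ
  have hkU_L : ∀ v, U *ᵥ v = 0 → L *ᵥ v = 0 := by
    intro v hv
    have hm : v ∈ LinearMap.ker U.mulVecLin := by
      rw [LinearMap.mem_ker, Matrix.mulVecLin_apply]; exact hv
    rw [← hker2, LinearMap.mem_ker, Matrix.mulVecLin_apply] at hm
    exact hm
  have hkU_Lt : ∀ v, U *ᵥ v = 0 → Lᵀ *ᵥ v = 0 := by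
    intro v hv
    have hm : v ∈ LinearMap.ker U.mulVecLin := by
      rw [LinearMap.mem_ker, Matrix.mulVecLin_apply]; exact hv
    rw [← hker2, hker1, LinearMap.mem_ker, Matrix.mulVecLin_apply] at hm
    exact hm
  -- columns of Up*U - 1 are killed by U
  have hcol : ∀ v, U *ᵥ ((Up * U) *ᵥ v - v) = 0 := by
    intro v
    have h' : (U * (Up * U)) *ᵥ v = U *ᵥ v := by
      rw [← Matrix.mul_assoc, h1]
    rw [Matrix.mulVec_sub]
    rw [← Matrix.mulVec_mulVec] at h'
    rw [h', sub_self]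
  have hL : L * Up * U = L := by
    apply eq_of_mulVec_eq'
    intro v
    have hz := hkU_L _ (hcol v)
    rw [Matrix.mulVec_sub] at hz
    have h' : L *ᵥ ((Up * U) *ᵥ v) = L *ᵥ v := sub_eq_zero.mp hz
    calc (L * Up * U) *ᵥ v = L *ᵥ ((Up * U) *ᵥ v) := by
          rw [Matrix.mul_assoc, Matrix.mulVec_mulVec]
    _ = L *ᵥ v := h'
  have hLt : Lᵀ * Up * U = Lᵀ := by
    apply eq_of_mulVec_eq'
    intro v
    have hz := hkU_Lt _ (hcol v)
    rw [Matrix.mulVec_sub] at hz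
    have h' : Lᵀ *ᵥ ((Up * U) *ᵥ v) = Lᵀ *ᵥ v := sub_eq_zero.mp hz
    calc (Lᵀ * Up * U) *ᵥ v = Lᵀ *ᵥ ((Up * U) *ᵥ v) := by
          rw [Matrix.mul_assoc, Matrix.mulVec_mulVec]
    _ = Lᵀ *ᵥ v := h'
  -- transpose: U * Up * L = L
  have hUL : U * Up * L = L := by
    have h := congrArg transpose hLt
    simp only [transpose_mul, transpose_transpose, hUs, hsym] at h
    rw [Matrix.mul_assoc]
    simpa only [Matrix.mul_assoc] using h
  -- key algebraic identity
  have h2U : L + Lᵀ = U + U := by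
    ext i j
    simp [hUdef, symmPart, Matrix.add_apply, Matrix.smul_apply, Matrix.transpose_apply]
    ring
  have hkey : (L - U)ᵀ * Up * (L - U) = Lᵀ * Up * L - U := by
    have hexp : (L - U)ᵀ * Up * (L - U)
        = Lᵀ * Up * L - Lᵀ * Up * U - (U * Up * L - U * Up * U) := by
      rw [transpose_sub, hUs]
      noncomm_ring
    rw [hexp, hLt, hUL, h1]
    rw [sub_sub, show Lᵀ + (L - U) = L + Lᵀ - U from by abel,
      h2U]
    abel
  rw [← hkey]
  -- Up is PSD since Up = Upᵀ * U * Up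
  have hUpPSD : Up.PosSemidef := by
    have hq : Up = (Up)ᴴ * U * Up := by
      rw [conjTranspose_eq_transpose_of_trivial, hsym, h2]
    rw [hq]
    exact hU.conjTranspose_mul_mul_same Up
  have := hUpPSD.conjTranspose_mul_mul_same (L - U)
  simpa [conjTranspose_eq_transpose_of_trivial] using this
end

section
/- Let M ∈ ℝ^{n×m}, and let a ∈ ℝ_{≥0}ⁿ, b ∈ ℝ_{≥0}^m with A = diag(a), B = diag(b). Then for all α, β ∈ [0,1]: ‖A M B‖₂ ≤ sqrt( ‖A^{2α} M B^{2β}‖_∞ · ‖A^{2(1−α)} M B^{2(1−β)}‖₁ ), where ‖·‖_∞ is the maximum ℓ₁ norm of a row and ‖·‖₁ is the maximum ℓ₁ norm of a column. -/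
open Matrix

/-- ‖C‖_∞ : the maximum ℓ₁ norm of a row. -/
noncomputable def rowNorm {p q : ℕ} (C : Matrix (Fin p) (Fin q) ℝ) : ℝ :=
  ⨆ i, ∑ j, |C i j|

/-- ‖C‖₁ : the maximum ℓ₁ norm of a column. -/
noncomputable def colNorm {p q : ℕ} (C : Matrix (Fin p) (Fin q) ℝ) : ℝ :=
  ⨆ j, ∑ i, |C i j|

private lemma rowNorm_nonneg {p q : ℕ} (C : Matrix (Fin p) (Fin q) ℝ) : 0 ≤ rowNorm C :=
  Real.iSup_nonneg fun _ => Finset.sum_nonneg fun _ _ => abs_nonneg _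

private lemma colNorm_nonneg {p q : ℕ} (C : Matrix (Fin p) (Fin q) ℝ) : 0 ≤ colNorm C :=
  Real.iSup_nonneg fun _ => Finset.sum_nonneg fun _ _ => abs_nonneg _

private lemma sum_le_rowNorm {p q : ℕ} (C : Matrix (Fin p) (Fin q) ℝ) (i : Fin p) :
    ∑ j, |C i j| ≤ rowNorm C := by
  exact le_ciSup (Set.Finite.bddAbove (Set.finite_range (fun i => ∑ j, |C i j|))) i

private lemma sum_le_colNorm {p q : ℕ} (C : Matrix (Fin p) (Fin q) ℝ) (j : Fin q) :
    ∑ i, |C i j| ≤ colNorm C := by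
  exact le_ciSup (Set.Finite.bddAbove (Set.finite_range (fun j => ∑ i, |C i j|))) j

private lemma key_sum {n m : ℕ} (M : Matrix (Fin n) (Fin m) ℝ)
    (a : Fin n → ℝ) (b : Fin m → ℝ)
    (ha : ∀ i, 0 ≤ a i) (hb : ∀ j, 0 ≤ b j)
    (α β : ℝ) (hα : α ∈ Set.Icc (0 : ℝ) 1) (hβ : β ∈ Set.Icc (0 : ℝ) 1)
    (x : Fin m → ℝ) :
    ∑ i, (∑ j, (a i * M i j * b j) * x j) ^ 2 ≤
      (rowNorm (Matrix.diagonal (fun i => a i ^ (2 * α)) * M *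
            Matrix.diagonal (fun j => b j ^ (2 * β))) *
       colNorm (Matrix.diagonal (fun i => a i ^ (2 * (1 - α))) * M *
            Matrix.diagonal (fun j => b j ^ (2 * (1 - β))))) * ∑ j, x j ^ 2 := by
  set C1 : Matrix (Fin n) (Fin m) ℝ := Matrix.diagonal (fun i => a i ^ (2 * α)) * M *
      Matrix.diagonal (fun j => b j ^ (2 * β)) with hC1
  set C2 : Matrix (Fin n) (Fin m) ℝ := Matrix.diagonal (fun i => a i ^ (2 * (1 - α))) * M *
      Matrix.diagonal (fun j => b j ^ (2 * (1 - β))) with hC2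
  have hα0 := hα.1; have hα1 := hα.2; have hβ0 := hβ.1; have hβ1 := hβ.2
  have hasplit : ∀ i, a i ^ α * a i ^ (1 - α) = a i := fun i => by
    rw [← Real.rpow_add_of_nonneg (ha i) hα0 (by linarith)]; norm_num
  have hbsplit : ∀ j, b j ^ β * b j ^ (1 - β) = b j := fun j => by
    rw [← Real.rpow_add_of_nonneg (hb j) hβ0 (by linarith)]; norm_num
  have hsq : ∀ (x : ℝ) (t : ℝ), 0 ≤ x → x ^ (2 * t) = (x ^ t) ^ 2 := fun x t hx => by
    rw [mul_comm, Real.rpow_mul hx, Real.rpow_two]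
  -- entries of C1, C2
  have hC1e : ∀ i j, |C1 i j| = (a i ^ α) ^ 2 * |M i j| * (b j ^ β) ^ 2 := by
    intro i j
    have : C1 i j = a i ^ (2 * α) * M i j * b j ^ (2 * β) := by
      simp [hC1, Matrix.mul_diagonal, Matrix.diagonal_mul]
    rw [this, abs_mul, abs_mul, abs_of_nonneg (Real.rpow_nonneg (ha i) _),
      abs_of_nonneg (Real.rpow_nonneg (hb j) _), hsq _ _ (ha i), hsq _ _ (hb j)]
  have hC2e : ∀ i j, |C2 i j| = (a i ^ (1 - α)) ^ 2 * |M i j| * (b j ^ (1 - β)) ^ 2 := by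
    intro i j
    have : C2 i j = a i ^ (2 * (1 - α)) * M i j * b j ^ (2 * (1 - β)) := by
      simp [hC2, Matrix.mul_diagonal, Matrix.diagonal_mul]
    rw [this, abs_mul, abs_mul, abs_of_nonneg (Real.rpow_nonneg (ha i) _),
      abs_of_nonneg (Real.rpow_nonneg (hb j) _), hsq _ _ (ha i), hsq _ _ (hb j)]
  have hrow : ∀ i, (∑ j, (a i * M i j * b j) * x j) ^ 2 ≤
      rowNorm C1 * ∑ j, |C2 i j| * x j ^ 2 := by
    intro i
    have h1 : (∑ j, (a i * M i j * b j) * x j) ^ 2 ≤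
        (∑ j, |(a i * M i j * b j) * x j|) ^ 2 := by
      rw [← sq_abs (∑ j, (a i * M i j * b j) * x j)]
      exact pow_le_pow_left₀ (abs_nonneg _) (Finset.abs_sum_le_sum_abs _ _) 2
    have h2 : ∀ j, |(a i * M i j * b j) * x j| =
        (a i ^ α * Real.sqrt |M i j| * b j ^ β) *
        (a i ^ (1 - α) * Real.sqrt |M i j| * b j ^ (1 - β) * |x j|) := by
      intro j
      have : (a i ^ α * Real.sqrt |M i j| * b j ^ β) *
          (a i ^ (1 - α) * Real.sqrt |M i j| * b j ^ (1 - β) * |x j|) =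
          (a i ^ α * a i ^ (1 - α)) * (Real.sqrt |M i j| * Real.sqrt |M i j|) *
          (b j ^ β * b j ^ (1 - β)) * |x j| := by ring
      rw [this, hasplit, hbsplit, Real.mul_self_sqrt (abs_nonneg _), abs_mul, abs_mul, abs_mul,
        abs_of_nonneg (ha i), abs_of_nonneg (hb j)]
    have h3 : (∑ j, |(a i * M i j * b j) * x j|) ^ 2 ≤
        (∑ j, (a i ^ α * Real.sqrt |M i j| * b j ^ β) ^ 2) *
        (∑ j, (a i ^ (1 - α) * Real.sqrt |M i j| * b j ^ (1 - β) * |x j|) ^ 2) := by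
      calc (∑ j, |(a i * M i j * b j) * x j|) ^ 2
          = (∑ j, (a i ^ α * Real.sqrt |M i j| * b j ^ β) *
              (a i ^ (1 - α) * Real.sqrt |M i j| * b j ^ (1 - β) * |x j|)) ^ 2 := by
            congr 1; exact Finset.sum_congr rfl fun j _ => h2 j
        _ ≤ _ := Finset.sum_mul_sq_le_sq_mul_sq _ _ _
    have h4 : ∑ j, (a i ^ α * Real.sqrt |M i j| * b j ^ β) ^ 2 = ∑ j, |C1 i j| := by
      refine Finset.sum_congr rfl fun j _ => ?_
      rw [hC1e]
      have : (Real.sqrt |M i j|) ^ 2 = |M i j| := Real.sq_sqrt (abs_nonneg _)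
      rw [mul_pow, mul_pow, this]
    have h5 : ∑ j, (a i ^ (1 - α) * Real.sqrt |M i j| * b j ^ (1 - β) * |x j|) ^ 2 =
        ∑ j, |C2 i j| * x j ^ 2 := by
      refine Finset.sum_congr rfl fun j _ => ?_
      rw [hC2e]
      have : (Real.sqrt |M i j|) ^ 2 = |M i j| := Real.sq_sqrt (abs_nonneg _)
      rw [mul_pow, mul_pow, mul_pow, this, sq_abs]
    have h6 : 0 ≤ ∑ j, |C2 i j| * x j ^ 2 :=
      Finset.sum_nonneg fun j _ => mul_nonneg (abs_nonneg _) (sq_nonneg _)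
    calc (∑ j, (a i * M i j * b j) * x j) ^ 2
        ≤ (∑ j, |(a i * M i j * b j) * x j|) ^ 2 := h1
      _ ≤ (∑ j, (a i ^ α * Real.sqrt |M i j| * b j ^ β) ^ 2) *
          (∑ j, (a i ^ (1 - α) * Real.sqrt |M i j| * b j ^ (1 - β) * |x j|) ^ 2) := h3
      _ = (∑ j, |C1 i j|) * (∑ j, |C2 i j| * x j ^ 2) := by rw [h4, h5]
      _ ≤ rowNorm C1 * ∑ j, |C2 i j| * x j ^ 2 :=
          mul_le_mul_of_nonneg_right (sum_le_rowNorm C1 i) h6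
  calc ∑ i, (∑ j, (a i * M i j * b j) * x j) ^ 2
      ≤ ∑ i, rowNorm C1 * ∑ j, |C2 i j| * x j ^ 2 :=
        Finset.sum_le_sum fun i _ => hrow i
    _ = rowNorm C1 * ∑ j, (∑ i, |C2 i j|) * x j ^ 2 := by
        rw [← Finset.mul_sum, Finset.sum_comm]
        congr 1
        exact Finset.sum_congr rfl fun j _ => (Finset.sum_mul _ _ _).symm
    _ ≤ rowNorm C1 * ∑ j, colNorm C2 * x j ^ 2 := by
        refine mul_le_mul_of_nonneg_left (Finset.sum_le_sum fun j _ => ?_) (rowNorm_nonneg C1)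
        exact mul_le_mul_of_nonneg_right (sum_le_colNorm C2 j) (sq_nonneg _)
    _ = rowNorm C1 * colNorm C2 * ∑ j, x j ^ 2 := by
        rw [← Finset.mul_sum, mul_assoc]

/-- For M ∈ ℝ^{n×m}, nonnegative a, b, A = diag a, B = diag b, and α, β ∈ [0,1]:
    ‖A M B‖₂ ≤ √(‖A^{2α} M B^{2β}‖_∞ · ‖A^{2(1−α)} M B^{2(1−β)}‖₁). -/
theorem stmt8 {n m : ℕ} (M : Matrix (Fin n) (Fin m) ℝ)
    (a : Fin n → ℝ) (b : Fin m → ℝ)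
    (ha : ∀ i, 0 ≤ a i) (hb : ∀ j, 0 ≤ b j)
    (α β : ℝ) (hα : α ∈ Set.Icc (0 : ℝ) 1) (hβ : β ∈ Set.Icc (0 : ℝ) 1) :
    sNorm (Matrix.diagonal a * M * Matrix.diagonal b) ≤
      Real.sqrt
        (rowNorm (Matrix.diagonal (fun i => a i ^ (2 * α)) * M *
            Matrix.diagonal (fun j => b j ^ (2 * β))) *
         colNorm (Matrix.diagonal (fun i => a i ^ (2 * (1 - α))) * M *
            Matrix.diagonal (fun j => b j ^ (2 * (1 - β))))) := by
  set C : Matrix (Fin n) (Fin m) ℝ := Matrix.diagonal a * M * Matrix.diagonal b with hC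
  set K : ℝ := rowNorm (Matrix.diagonal (fun i => a i ^ (2 * α)) * M *
            Matrix.diagonal (fun j => b j ^ (2 * β))) *
         colNorm (Matrix.diagonal (fun i => a i ^ (2 * (1 - α))) * M *
            Matrix.diagonal (fun j => b j ^ (2 * (1 - β)))) with hK
  have hK0 : 0 ≤ K := mul_nonneg (rowNorm_nonneg _) (colNorm_nonneg _)
  rw [sNorm]
  refine ContinuousLinearMap.opNorm_le_bound _ (Real.sqrt_nonneg _) fun x => ?_
  have hnorm : ‖(LinearMap.toContinuousLinearMap (Matrix.toEuclideanLin C)) x‖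
      = Real.sqrt (∑ i, (C.mulVec x i) ^ 2) := by
    simp only [LinearMap.coe_toContinuousLinearMap', Matrix.toEuclideanLin_apply,
      EuclideanSpace.norm_eq, Real.norm_eq_abs, sq_abs]
  have hxnorm : ‖x‖ = Real.sqrt (∑ j, (x j : ℝ) ^ 2) := by
    simp [EuclideanSpace.norm_eq, sq_abs]
  have hmv : ∀ i, C.mulVec x i = ∑ j, (a i * M i j * b j) * (x j : ℝ) := by
    intro i
    simp only [Matrix.mulVec, dotProduct]
    refine Finset.sum_congr rfl fun j _ => ?_
    congr 1
    simp [hC, Matrix.mul_diagonal, Matrix.diagonal_mul]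
  have hsum : ∑ i, (C.mulVec x i) ^ 2 ≤ K * ∑ j, (x j : ℝ) ^ 2 := by
    calc ∑ i, (C.mulVec x i) ^ 2
        = ∑ i, (∑ j, (a i * M i j * b j) * (x j : ℝ)) ^ 2 :=
          Finset.sum_congr rfl fun i _ => by rw [hmv]
      _ ≤ K * ∑ j, (x j : ℝ) ^ 2 := key_sum M a b ha hb α β hα hβ _
  rw [hnorm, hxnorm, ← Real.sqrt_mul hK0]
  exact Real.sqrt_le_sqrt hsum
end

section
/- Let M ∈ ℝ^{n×n} and let D₁ ∈ ℝ^{n×n}, D₂ ∈ ℝ^{n×n} be positive definite diagonal matrices. Then ‖D₁^{−1/2} M D₂^{−1/2}‖₂ ≤ max( ‖D₁^{−1} M‖_∞ , ‖D₂^{−1} Mᵀ‖_∞ ), where ‖·‖_∞ denotes the maximum row ℓ₁ norm. -/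
open Matrix

lemma toEuclideanLin_coord {n : ℕ} (A : Matrix (Fin n) (Fin n) ℝ)
    (x : EuclideanSpace ℝ (Fin n)) (i : Fin n) :
    (Matrix.toEuclideanLin A x) i = ∑ j, A i j * x j := by
  simp [Matrix.toEuclideanLin, Matrix.mulVec, dotProduct]

/-- Schur test. -/
lemma schur {n : ℕ} (A : Matrix (Fin n) (Fin n) ℝ) (p q : Fin n → ℝ)
    (hp : ∀ i, 0 < p i) (hq : ∀ j, 0 < q j) {α β : ℝ} (hα : 0 ≤ α) (hβ : 0 ≤ β)
    (h1 : ∀ i, ∑ j, |A i j| * q j ≤ α * p i)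
    (h2 : ∀ j, ∑ i, |A i j| * p i ≤ β * q j) :
    sNorm A ≤ Real.sqrt (α * β) := by
  unfold sNorm
  apply ContinuousLinearMap.opNorm_le_bound _ (Real.sqrt_nonneg _)
  intro x
  have hstep : ∀ i, (∑ j, A i j * x j) ^ 2 ≤
      (α * p i) * ∑ j, |A i j| / q j * (x j) ^ 2 := by
    intro i
    have h0 : (∑ j, A i j * x j) ^ 2 ≤ (∑ j, |A i j| * |x j|) ^ 2 := by
      rw [← sq_abs]
      apply pow_le_pow_left₀ (abs_nonneg _)
      calc |∑ j, A i j * x j| ≤ ∑ j, |A i j * x j| := Finset.abs_sum_le_sum_abs _ _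
        _ = ∑ j, |A i j| * |x j| := by simp [abs_mul]
    have e1 : ∀ j, Real.sqrt (|A i j| * q j) * (Real.sqrt (|A i j| / q j) * |x j|)
        = |A i j| * |x j| := by
      intro j
      rw [← mul_assoc, ← Real.sqrt_mul (mul_nonneg (abs_nonneg _) (hq j).le)]
      have : |A i j| * q j * (|A i j| / q j) = |A i j| ^ 2 := by
        field_simp [(hq j).ne']
      rw [this, Real.sqrt_sq (abs_nonneg _)]
    have e2 : ∀ j, Real.sqrt (|A i j| * q j) ^ 2 = |A i j| * q j := fun j =>
      Real.sq_sqrt (mul_nonneg (abs_nonneg _) (hq j).le)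
    have e3 : ∀ j, (Real.sqrt (|A i j| / q j) * |x j|) ^ 2 = |A i j| / q j * (x j) ^ 2 := by
      intro j
      rw [mul_pow, Real.sq_sqrt (div_nonneg (abs_nonneg _) (hq j).le), sq_abs]
    have hcs := Finset.sum_mul_sq_le_sq_mul_sq Finset.univ
      (fun j => Real.sqrt (|A i j| * q j)) (fun j => Real.sqrt (|A i j| / q j) * |x j|)
    simp only [e1, e2, e3] at hcs
    have hmul : (∑ j, |A i j| * q j) * (∑ j, |A i j| / q j * (x j) ^ 2) ≤
        (α * p i) * ∑ j, |A i j| / q j * (x j) ^ 2 := by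
      apply mul_le_mul_of_nonneg_right (h1 i)
      apply Finset.sum_nonneg
      intro j _
      have := (hq j).le
      positivity
    exact le_trans h0 (le_trans hcs hmul)
  have hsum : ∑ i, (∑ j, A i j * x j) ^ 2 ≤ (α * β) * ∑ j, (x j) ^ 2 := by
    calc ∑ i, (∑ j, A i j * x j) ^ 2
        ≤ ∑ i, (α * p i) * ∑ j, |A i j| / q j * (x j) ^ 2 :=
          Finset.sum_le_sum fun i _ => hstep i
      _ = ∑ j, α * ((x j) ^ 2 / q j) * ∑ i, |A i j| * p i := by
          simp only [Finset.mul_sum]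
          rw [Finset.sum_comm]
          exact Finset.sum_congr rfl fun j _ => Finset.sum_congr rfl fun i _ => by ring
      _ ≤ ∑ j, α * ((x j) ^ 2 / q j) * (β * q j) := by
          apply Finset.sum_le_sum
          intro j _
          apply mul_le_mul_of_nonneg_left (h2 j)
          have := (hq j).le
          positivity
      _ = (α * β) * ∑ j, (x j) ^ 2 := by
          rw [Finset.mul_sum]
          apply Finset.sum_congr rfl
          intro j _
          field_simp [(hq j).ne']
  have hxnorm : ‖x‖ = Real.sqrt (∑ j, (x j) ^ 2) := by
    rw [EuclideanSpace.norm_eq]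
    simp [Real.norm_eq_abs, sq_abs]
  have hfx : ‖(LinearMap.toContinuousLinearMap (Matrix.toEuclideanLin A)) x‖
      = Real.sqrt (∑ i, (∑ j, A i j * x j) ^ 2) := by
    rw [show ((LinearMap.toContinuousLinearMap (Matrix.toEuclideanLin A)) x)
        = Matrix.toEuclideanLin A x from rfl, EuclideanSpace.norm_eq]
    congr 1
    apply Finset.sum_congr rfl
    intro i _
    rw [Real.norm_eq_abs, sq_abs, toEuclideanLin_coord]
  rw [hfx, hxnorm, ← Real.sqrt_mul (by positivity)]
  exact Real.sqrt_le_sqrt hsum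

/-- For positive diagonal D₁, D₂:
    ‖D₁^{−1/2} M D₂^{−1/2}‖₂ ≤ max(‖D₁^{−1} M‖_∞, ‖D₂^{−1} Mᵀ‖_∞). -/
theorem stmt9 {n : ℕ} (M : Matrix (Fin n) (Fin n) ℝ) (d₁ d₂ : Fin n → ℝ)
    (h₁ : ∀ i, 0 < d₁ i) (h₂ : ∀ i, 0 < d₂ i) :
    sNorm (Matrix.diagonal (fun i => (Real.sqrt (d₁ i))⁻¹) * M *
        Matrix.diagonal (fun i => (Real.sqrt (d₂ i))⁻¹)) ≤
      max (rowNorm (Matrix.diagonal (fun i => (d₁ i)⁻¹) * M))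
          (rowNorm (Matrix.diagonal (fun i => (d₂ i)⁻¹) * Mᵀ)) := by
  rcases Nat.eq_zero_or_pos n with hn | hn
  · subst hn
    have hz : sNorm (Matrix.diagonal (fun i => (Real.sqrt (d₁ i))⁻¹) * M *
        Matrix.diagonal (fun i => (Real.sqrt (d₂ i))⁻¹)) ≤ 0 := by
      unfold sNorm
      apply ContinuousLinearMap.opNorm_le_bound _ le_rfl
      intro x
      have : x = 0 := Subsingleton.elim x 0
      simp [this]
    refine le_trans hz ?_
    unfold rowNorm
    simp [Real.iSup_of_isEmpty]
  · set A := Matrix.diagonal (fun i => (Real.sqrt (d₁ i))⁻¹) * M *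
      Matrix.diagonal (fun i => (Real.sqrt (d₂ i))⁻¹) with hA
    set α := rowNorm (Matrix.diagonal (fun i => (d₁ i)⁻¹) * M) with hαdef
    set β := rowNorm (Matrix.diagonal (fun i => (d₂ i)⁻¹) * Mᵀ) with hβdef
    have hAentry : ∀ i j, A i j = (Real.sqrt (d₁ i))⁻¹ * M i j * (Real.sqrt (d₂ j))⁻¹ := by
      intro i j
      simp [hA, Matrix.mul_apply, Matrix.diagonal, Finset.sum_ite_eq, Finset.sum_ite_eq']
    have hs1 : ∀ i, 0 < Real.sqrt (d₁ i) := fun i => Real.sqrt_pos.mpr (h₁ i)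
    have hs2 : ∀ j, 0 < Real.sqrt (d₂ j) := fun j => Real.sqrt_pos.mpr (h₂ j)
    -- row sums
    have hαrow : ∀ i, ∑ j, |(Matrix.diagonal (fun k => (d₁ k)⁻¹) * M) i j| ≤ α := by
      intro i
      exact le_ciSup (f := fun i => ∑ j, |((Matrix.diagonal fun k => (d₁ k)⁻¹) * M) i j|)
        (Set.Finite.bddAbove (Set.finite_range _)) i
    have hβrow : ∀ j, ∑ i, |(Matrix.diagonal (fun k => (d₂ k)⁻¹) * Mᵀ) j i| ≤ β := by
      intro j
      exact le_ciSup (f := fun j => ∑ i, |((Matrix.diagonal fun k => (d₂ k)⁻¹) * Mᵀ) j i|)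
        (Set.Finite.bddAbove (Set.finite_range _)) j
    have hrow1 : ∀ i, ∑ j, |(Matrix.diagonal (fun k => (d₁ k)⁻¹) * M) i j|
        = (d₁ i)⁻¹ * ∑ j, |M i j| := by
      intro i
      rw [Finset.mul_sum]
      apply Finset.sum_congr rfl
      intro j _
      rw [Matrix.diagonal_mul, abs_mul, abs_of_pos (inv_pos.mpr (h₁ i))]
    have hrow2 : ∀ j, ∑ i, |(Matrix.diagonal (fun k => (d₂ k)⁻¹) * Mᵀ) j i|
        = (d₂ j)⁻¹ * ∑ i, |M i j| := by
      intro j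
      rw [Finset.mul_sum]
      apply Finset.sum_congr rfl
      intro i _
      rw [Matrix.diagonal_mul, abs_mul, abs_of_pos (inv_pos.mpr (h₂ j)), Matrix.transpose_apply]
    obtain ⟨i0⟩ := Fin.pos_iff_nonempty.mp hn
    have hα : 0 ≤ α := le_trans (by positivity : (0:ℝ) ≤ ∑ j, |(Matrix.diagonal (fun k => (d₁ k)⁻¹) * M) i0 j|) (hαrow i0)
    have hβ : 0 ≤ β := le_trans (by positivity : (0:ℝ) ≤ ∑ i, |(Matrix.diagonal (fun k => (d₂ k)⁻¹) * Mᵀ) i0 i|) (hβrow i0)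
    have key := schur A (fun i => Real.sqrt (d₁ i)) (fun j => Real.sqrt (d₂ j))
      hs1 hs2 hα hβ ?_ ?_
    · refine le_trans key ?_
      have h1 : α * β ≤ max α β * max α β :=
        mul_le_mul (le_max_left _ _) (le_max_right _ _) hβ (le_trans hα (le_max_left _ _))
      calc Real.sqrt (α * β) ≤ Real.sqrt (max α β * max α β) := Real.sqrt_le_sqrt h1
        _ = max α β := Real.sqrt_mul_self (le_trans hα (le_max_left _ _))
    · -- h1
      intro i
      have habs : ∀ j, |A i j| * Real.sqrt (d₂ j) = (Real.sqrt (d₁ i))⁻¹ * |M i j| := by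
        intro j
        rw [hAentry, abs_mul, abs_mul, abs_of_pos (inv_pos.mpr (hs1 i)),
          abs_of_pos (inv_pos.mpr (hs2 j))]
        field_simp [(hs1 i).ne', (hs2 j).ne']
      have lhs_eq : ∑ j, |A i j| * Real.sqrt (d₂ j) = (Real.sqrt (d₁ i))⁻¹ * ∑ j, |M i j| := by
        rw [Finset.mul_sum]
        exact Finset.sum_congr rfl fun j _ => habs j
      rw [lhs_eq]
      have h := mul_le_mul_of_nonneg_right ((hrow1 i ▸ hαrow i)) (hs1 i).le
      have hid : (d₁ i)⁻¹ * (∑ j, |M i j|) * Real.sqrt (d₁ i)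
          = (Real.sqrt (d₁ i))⁻¹ * ∑ j, |M i j| := by
        have hd : d₁ i = Real.sqrt (d₁ i) * Real.sqrt (d₁ i) :=
          (Real.mul_self_sqrt (h₁ i).le).symm
        rw [hd]
        field_simp [(hs1 i).ne']
        simp [Real.sqrt_sq (hs1 i).le]
        ring
      rw [hid] at h
      exact h
    · -- h2
      intro j
      have habs : ∀ i, |A i j| * Real.sqrt (d₁ i) = (Real.sqrt (d₂ j))⁻¹ * |M i j| := by
        intro i
        rw [hAentry, abs_mul, abs_mul, abs_of_pos (inv_pos.mpr (hs1 i)),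
          abs_of_pos (inv_pos.mpr (hs2 j))]
        field_simp [(hs1 i).ne', (hs2 j).ne']
      have lhs_eq : ∑ i, |A i j| * Real.sqrt (d₁ i) = (Real.sqrt (d₂ j))⁻¹ * ∑ i, |M i j| := by
        rw [Finset.mul_sum]
        exact Finset.sum_congr rfl fun i _ => habs i
      rw [lhs_eq]
      have h := mul_le_mul_of_nonneg_right ((hrow2 j ▸ hβrow j)) (hs2 j).le
      have hid : (d₂ j)⁻¹ * (∑ i, |M i j|) * Real.sqrt (d₂ j)
          = (Real.sqrt (d₂ j))⁻¹ * ∑ i, |M i j| := by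
        have hd : d₂ j = Real.sqrt (d₂ j) * Real.sqrt (d₂ j) :=
          (Real.mul_self_sqrt (h₂ j).le).symm
        rw [hd]
        field_simp [(hs2 j).ne']
        simp [Real.sqrt_sq (hs2 j).le]
        ring
      rw [hid] at h
      exact h
end

section
/- Let M be an n×n matrix such that U_M := (M+Mᵀ)/2 is PSD, with ker(M) = ker(Mᵀ) = ker(U_M). Let M̃ be an ε-approximation of M with ε ≤ 1/2 (i.e., ker(U_M) ⊆ ker(M̃−M) ∩ ker((M̃−M)ᵀ) and ‖U_M^{†/2}(M̃−M)U_M^{†/2}‖₂ ≤ ε). Then ‖I_{im(M)} − M̃† M‖_{U_M→U_M} ≤ ε/(1−ε) ≤ 2ε, i.e., M̃† is a 2ε-approximate pseudoinverse of M with respect to U_M. -/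
open Matrix

/-- `At` is an ε-approximation of `A`: the symmetrization U_A is PSD,
    ker(U_A) ⊆ ker(At − A) ∩ ker((At − A)ᵀ), and ‖U_A^{†/2}(At − A)U_A^{†/2}‖₂ ≤ ε,
    where U_A^{†/2} is expressed via the (unique) PSD square root R of U_A and
    its (unique) Moore–Penrose pseudoinverse S. -/
def IsApprox {n : ℕ} (ε : ℝ) (A At : Matrix (Fin n) (Fin n) ℝ) : Prop :=
  (symmPart A).PosSemidef ∧
  (∀ v : Fin n → ℝ, symmPart A *ᵥ v = 0 → (At - A) *ᵥ v = 0 ∧ (At - A)ᵀ *ᵥ v = 0) ∧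
  (∀ R S : Matrix (Fin n) (Fin n) ℝ, R.PosSemidef → R * R = symmPart A →
    IsMoorePenrose R S → sNorm (S * (At - A) * S) ≤ ε)

/-- `P` is the orthogonal projection onto the column space (image) of `M`. -/
def IsOrthProjOnto {n : ℕ} (P M : Matrix (Fin n) (Fin n) ℝ) : Prop :=
  Pᵀ = P ∧ P * P = P ∧ LinearMap.range P.mulVecLin = LinearMap.range M.mulVecLin

/-- The U-seminorm ‖x‖_U = √(xᵀUx). -/
noncomputable def uNorm {n : ℕ} (U : Matrix (Fin n) (Fin n) ℝ) (x : Fin n → ℝ) : ℝ :=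
  Real.sqrt (x ⬝ᵥ (U *ᵥ x))

/-- The induced seminorm ‖A‖_{U→U} = sup over x with Ux ≠ 0 of ‖Ax‖_U / ‖x‖_U. -/
noncomputable def uOpNorm {n : ℕ} (U A : Matrix (Fin n) (Fin n) ℝ) : ℝ :=
  sSup {r : ℝ | ∃ x : Fin n → ℝ, U *ᵥ x ≠ 0 ∧ r = uNorm U (A *ᵥ x) / uNorm U x}

variable {n : ℕ}

noncomputable def ev (v : Fin n → ℝ) : EuclideanSpace ℝ (Fin n) :=
  (WithLp.equiv 2 (Fin n → ℝ)).symm v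

lemma ev_mulVec (A : Matrix (Fin n) (Fin n) ℝ) (v : Fin n → ℝ) :
    Matrix.toEuclideanLin A (ev v) = ev (A *ᵥ v) :=
  Matrix.toEuclideanLin_apply_piLp_toLp A v

lemma inner_ev (v w : Fin n → ℝ) : (inner ℝ (ev v) (ev w) : ℝ) = v ⬝ᵥ w := by
  simp [ev, PiLp.inner_apply, dotProduct, mul_comm]

lemma norm_ev_sq (v : Fin n → ℝ) : ‖ev v‖ ^ 2 = v ⬝ᵥ v := by
  rw [← real_inner_self_eq_norm_sq, inner_ev]

lemma sNorm_nonneg (A : Matrix (Fin n) (Fin n) ℝ) : 0 ≤ sNorm A := norm_nonneg _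

lemma sNorm_bound (A : Matrix (Fin n) (Fin n) ℝ) (v : Fin n → ℝ) :
    ‖ev (A *ᵥ v)‖ ≤ sNorm A * ‖ev v‖ := by
  rw [← ev_mulVec]
  exact (LinearMap.toContinuousLinearMap (Matrix.toEuclideanLin A)).le_opNorm (ev v)


lemma conjT_eq_transpose (A : Matrix (Fin n) (Fin n) ℝ) : Aᴴ = Aᵀ := by
  ext i j; simp [Matrix.conjTranspose_apply]

lemma range_adjoint_eq (T : EuclideanSpace ℝ (Fin n) →ₗ[ℝ] EuclideanSpace ℝ (Fin n)) :
    LinearMap.range (LinearMap.adjoint T) = (LinearMap.ker T)ᗮ := by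
  have h1 : (LinearMap.range (LinearMap.adjoint T))ᗮ ≤ LinearMap.ker T := by
    intro z hz
    rw [LinearMap.mem_ker, ← inner_self_eq_zero (𝕜 := ℝ)]
    have := (Submodule.mem_orthogonal _ z).mp hz (LinearMap.adjoint T (T z))
      ⟨T z, rfl⟩
    rwa [LinearMap.adjoint_inner_left] at this
  apply le_antisymm
  · rintro x ⟨y, rfl⟩
    rw [Submodule.mem_orthogonal]
    intro u hu
    rw [LinearMap.adjoint_inner_right, LinearMap.mem_ker.mp hu, inner_zero_left]
  · calc (LinearMap.ker T)ᗮ ≤ ((LinearMap.range (LinearMap.adjoint T))ᗮ)ᗮ :=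
          Submodule.orthogonal_le h1
      _ = LinearMap.range (LinearMap.adjoint T) := Submodule.orthogonal_orthogonal _

lemma toEuclideanLin_eq_zero_iff (A : Matrix (Fin n) (Fin n) ℝ) (z : EuclideanSpace ℝ (Fin n)) :
    Matrix.toEuclideanLin A z = 0 ↔ A *ᵥ ((WithLp.equiv 2 (Fin n → ℝ)) z) = 0 := by
  rw [Matrix.toEuclideanLin_apply]
  constructor
  · intro h; simpa using congrArg (WithLp.equiv 2 (Fin n → ℝ)) h
  · intro h; simpa using h

lemma range_transpose_le_of_ker_le (A B : Matrix (Fin n) (Fin n) ℝ)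
    (h : ∀ v, B *ᵥ v = 0 → A *ᵥ v = 0) :
    LinearMap.range Aᵀ.mulVecLin ≤ LinearMap.range Bᵀ.mulVecLin := by
  have hT : ∀ C : Matrix (Fin n) (Fin n) ℝ,
      Matrix.toEuclideanLin Cᵀ = LinearMap.adjoint (Matrix.toEuclideanLin C) := by
    intro C
    rw [← conjT_eq_transpose]
    exact Matrix.toEuclideanLin_conjTranspose_eq_adjoint C
  have hker : LinearMap.ker (Matrix.toEuclideanLin B) ≤ LinearMap.ker (Matrix.toEuclideanLin A) := by
    intro z hz
    rw [LinearMap.mem_ker, toEuclideanLin_eq_zero_iff] at *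
    exact h _ (hz)
  have hrange : LinearMap.range (Matrix.toEuclideanLin Aᵀ)
      ≤ LinearMap.range (Matrix.toEuclideanLin Bᵀ) := by
    rw [hT A, hT B, range_adjoint_eq, range_adjoint_eq]
    exact Submodule.orthogonal_le hker
  rintro x ⟨y, rfl⟩
  obtain ⟨w, hw⟩ := hrange ⟨ev y, by rw [ev_mulVec]⟩
  refine ⟨(WithLp.equiv 2 (Fin n → ℝ)) w, ?_⟩
  have := congrArg (WithLp.equiv 2 (Fin n → ℝ)) hw
  simp only [Matrix.toEuclideanLin_apply, ev, Equiv.apply_symm_apply] at this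
  exact this

lemma exists_pinv (R : Matrix (Fin n) (Fin n) ℝ) (hR : R.IsHermitian) :
    ∃ S : Matrix (Fin n) (Fin n) ℝ, IsMoorePenrose R S ∧ Sᵀ = S ∧ S * R = R * S := by
  set V : Matrix (Fin n) (Fin n) ℝ := (hR.eigenvectorUnitary : Matrix (Fin n) (Fin n) ℝ) with hV
  have hV1 : V * star V = 1 := Matrix.mem_unitaryGroup_iff.mp hR.eigenvectorUnitary.2
  have hV2 : star V * V = 1 := Matrix.mem_unitaryGroup_iff'.mp hR.eigenvectorUnitary.2
  set g : Fin n → ℝ := RCLike.ofReal ∘ hR.eigenvalues with hg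
  have spec : R = V * Matrix.diagonal g * star V := hR.spectral_theorem
  have key : ∀ X Y : Matrix (Fin n) (Fin n) ℝ,
      (V * X * star V) * (V * Y * star V) = V * (X * Y) * star V := by
    intro X Y
    simp only [mul_assoc]
    rw [← mul_assoc (star V) V, hV2, one_mul]
  have tkey : ∀ X : Matrix (Fin n) (Fin n) ℝ, Xᵀ = X → (V * X * star V)ᵀ = V * X * star V := by
    intro X hX
    rw [Matrix.star_eq_conjTranspose, conjT_eq_transpose, Matrix.transpose_mul,
      Matrix.transpose_mul, Matrix.transpose_transpose, hX, mul_assoc]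
  refine ⟨V * Matrix.diagonal (fun i => (g i)⁻¹) * star V, ⟨?_, ?_, ?_, ?_⟩, ?_, ?_⟩
  · have hfun : (fun i => g i * (g i)⁻¹ * g i) = g := by
      funext i
      rcases eq_or_ne (g i) 0 with h | h
      · simp [h]
      · field_simp
    rw [spec, key, key, Matrix.diagonal_mul_diagonal, Matrix.diagonal_mul_diagonal, hfun]
  · have hfun : (fun i => (g i)⁻¹ * g i * (g i)⁻¹) = fun i => (g i)⁻¹ := by
      funext i
      rcases eq_or_ne (g i) 0 with h | h
      · simp [h]
      · field_simp
    rw [spec, key, key, Matrix.diagonal_mul_diagonal, Matrix.diagonal_mul_diagonal, hfun]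
  · rw [spec, key, Matrix.diagonal_mul_diagonal]
    exact tkey _ (Matrix.diagonal_transpose _)
  · rw [spec, key, Matrix.diagonal_mul_diagonal]
    exact tkey _ (Matrix.diagonal_transpose _)
  · exact tkey _ (Matrix.diagonal_transpose _)
  · have hfun : (fun i => (g i)⁻¹ * g i) = fun i => g i * (g i)⁻¹ := by
      funext i; rw [mul_comm]
    rw [spec, key, key, Matrix.diagonal_mul_diagonal, Matrix.diagonal_mul_diagonal, hfun]

lemma dot_sym {R : Matrix (Fin n) (Fin n) ℝ} (hR : Rᵀ = R) (v w : Fin n → ℝ) :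
    v ⬝ᵥ (R *ᵥ w) = (R *ᵥ v) ⬝ᵥ w := by
  have h2 : v ᵥ* R = R *ᵥ v := by
    conv_lhs => rw [← hR]
    rw [Matrix.vecMul_transpose]
  rw [Matrix.dotProduct_mulVec, h2]

lemma eq_of_mulVec {A B : Matrix (Fin n) (Fin n) ℝ} (h : ∀ v, A *ᵥ v = B *ᵥ v) : A = B :=
  Matrix.toLin'.injective (LinearMap.ext fun v => by
    rw [Matrix.toLin'_apply, Matrix.toLin'_apply, h])

lemma mem_range_mulVecLin {A : Matrix (Fin n) (Fin n) ℝ} {x : Fin n → ℝ} :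
    x ∈ LinearMap.range A.mulVecLin ↔ ∃ v, A *ᵥ v = x := Iff.rfl

/-- Cauchy-Schwarz + operator norm bound on dot products. -/
lemma dot_mulVec_le (F : Matrix (Fin n) (Fin n) ℝ) (x y : Fin n → ℝ) :
    x ⬝ᵥ (F *ᵥ y) ≤ ‖ev x‖ * (sNorm F * ‖ev y‖) := by
  calc x ⬝ᵥ (F *ᵥ y) = (inner ℝ (ev x) (ev (F *ᵥ y)) : ℝ) := (inner_ev _ _).symm
    _ ≤ ‖ev x‖ * ‖ev (F *ᵥ y)‖ := real_inner_le_norm _ _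
    _ ≤ ‖ev x‖ * (sNorm F * ‖ev y‖) := by
        have := sNorm_bound F y
        exact mul_le_mul_of_nonneg_left this (norm_nonneg _)

lemma norm_ev_eq_sqrt (v : Fin n → ℝ) : ‖ev v‖ = Real.sqrt (v ⬝ᵥ v) := by
  rw [← norm_ev_sq, Real.sqrt_sq (norm_nonneg _)]

/-- If M has PSD symmetrization U_M with ker M = ker Mᵀ = ker U_M, and M̃ is an
    ε-approximation of M with ε ≤ 1/2, then
    ‖I_{im(M)} − M̃† M‖_{U_M→U_M} ≤ ε/(1−ε) ≤ 2ε. -/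
theorem stmt15 {n : ℕ} (ε : ℝ) (M Mt : Matrix (Fin n) (Fin n) ℝ)
    (hker1 : LinearMap.ker M.mulVecLin = LinearMap.ker Mᵀ.mulVecLin)
    (hker2 : LinearMap.ker M.mulVecLin = LinearMap.ker (symmPart M).mulVecLin)
    (hε : ε ≤ 1 / 2)
    (happrox : IsApprox ε M Mt)
    (Mtp : Matrix (Fin n) (Fin n) ℝ) (hMtp : IsMoorePenrose Mt Mtp)
    (P : Matrix (Fin n) (Fin n) ℝ) (hP : IsOrthProjOnto P M) :
    uOpNorm (symmPart M) (P - Mtp * M) ≤ ε / (1 - ε) ∧ ε / (1 - ε) ≤ 2 * ε := by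
  obtain ⟨hU, hEker, hSbound⟩ := happrox
  set U : Matrix (Fin n) (Fin n) ℝ := symmPart M with hUdef
  set E : Matrix (Fin n) (Fin n) ℝ := Mt - M with hEdef
  set R : Matrix (Fin n) (Fin n) ℝ := (open scoped MatrixOrder in CFC.sqrt U) with hRdef
  have hRpsd : R.PosSemidef := (open scoped MatrixOrder in Matrix.nonneg_iff_posSemidef.mp (CFC.sqrt_nonneg U))
  have hRsq : R * R = U := (open scoped MatrixOrder in CFC.sqrt_mul_sqrt_self U hU.nonneg)
  obtain ⟨S, hMP, hSsym, hScomm⟩ := exists_pinv R hRpsd.1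
  have hRsym : Rᵀ = R := by rw [← conjT_eq_transpose]; exact hRpsd.1
  set F : Matrix (Fin n) (Fin n) ℝ := S * E * S with hFdef
  have hFle : sNorm F ≤ ε := hSbound R S hRpsd hRsq hMP
  have hε0 : 0 ≤ ε := le_trans (sNorm_nonneg F) hFle
  have h1ε : 0 < 1 - ε := by linarith
  refine ⟨?_, by rw [div_le_iff₀ h1ε]; nlinarith⟩
  -- kernel iff facts
  have kMU : ∀ v, M *ᵥ v = 0 ↔ U *ᵥ v = 0 := fun v => by
    have := Submodule.ext_iff.mp hker2 v
    simpa [LinearMap.mem_ker, Matrix.mulVecLin_apply] using this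
  have kMTU : ∀ v, Mᵀ *ᵥ v = 0 ↔ U *ᵥ v = 0 := fun v => by
    have := Submodule.ext_iff.mp (hker1.symm.trans hker2) v
    simpa only [LinearMap.mem_ker, Matrix.mulVecLin_apply] using this
  have qU : ∀ v, v ⬝ᵥ (U *ᵥ v) = (R *ᵥ v) ⬝ᵥ (R *ᵥ v) := fun v => by
    rw [← hRsq, ← Matrix.mulVec_mulVec, dot_sym hRsym]
  have kUR : ∀ v, U *ᵥ v = 0 ↔ R *ᵥ v = 0 := fun v => by
    constructor
    · intro h
      have h2 : (R *ᵥ v) ⬝ᵥ (R *ᵥ v) = 0 := by rw [← qU, h, dotProduct_zero]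
      exact dotProduct_self_eq_zero.mp h2
    · intro h
      rw [← hRsq, ← Matrix.mulVec_mulVec, h, Matrix.mulVec_zero]
  -- projection Π = R * S fixes columns spaces related to U
  have fixLeft : ∀ A : Matrix (Fin n) (Fin n) ℝ,
      (∀ v, U *ᵥ v = 0 → Aᵀ *ᵥ v = 0) → (R * S) * A = A := by
    intro A hA
    have hrange : LinearMap.range A.mulVecLin ≤ LinearMap.range R.mulVecLin := by
      have := range_transpose_le_of_ker_le Aᵀ R (fun v hv => hA v ((kUR v).mpr hv))
      rwa [Matrix.transpose_transpose, hRsym] at this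
    apply eq_of_mulVec
    intro v
    obtain ⟨w, hw⟩ := hrange ⟨v, rfl⟩
    simp only [Matrix.mulVecLin_apply] at hw
    rw [← Matrix.mulVec_mulVec, ← hw, Matrix.mulVec_mulVec, hMP.1]
  have hPiE : (R * S) * E = E := fixLeft E (fun v hv => (hEker v hv).2)
  have hPiEt : (R * S) * Eᵀ = Eᵀ := fixLeft Eᵀ (fun v hv => by
    rw [Matrix.transpose_transpose]; exact (hEker v hv).1)
  have hEPi : E * (S * R) = E := by
    have := congrArg Matrix.transpose hPiEt
    rwa [Matrix.transpose_mul, Matrix.transpose_mul, Matrix.transpose_transpose,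
      hSsym, hRsym] at this
  have hERFR : E = R * F * R := by
    calc E = (R * S) * E := hPiE.symm
      _ = (R * S) * (E * (S * R)) := by rw [hEPi]
      _ = R * F * R := by rw [hFdef]; simp only [mul_assoc]
  -- quadratic form facts
  have qT : ∀ (A : Matrix (Fin n) (Fin n) ℝ) (v : Fin n → ℝ),
      v ⬝ᵥ (Aᵀ *ᵥ v) = v ⬝ᵥ (A *ᵥ v) := fun A v => by
    rw [Matrix.dotProduct_mulVec, Matrix.vecMul_transpose, dotProduct_comm]
  have qM : ∀ v, v ⬝ᵥ (M *ᵥ v) = v ⬝ᵥ (U *ᵥ v) := fun v => by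
    have hU2 : U = (2⁻¹ : ℝ) • (M + Mᵀ) := hUdef
    rw [hU2, Matrix.smul_mulVec, dotProduct_smul, Matrix.add_mulVec,
      dotProduct_add, qT, smul_eq_mul]
    ring
  have qFabs : ∀ x : Fin n → ℝ, |x ⬝ᵥ (F *ᵥ x)| ≤ ε * (x ⬝ᵥ x) := fun x => by
    calc |x ⬝ᵥ (F *ᵥ x)| = |(inner ℝ (ev x) (ev (F *ᵥ x)) : ℝ)| := by rw [inner_ev]
      _ ≤ ‖ev x‖ * ‖ev (F *ᵥ x)‖ := abs_real_inner_le_norm _ _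
      _ ≤ ‖ev x‖ * (sNorm F * ‖ev x‖) :=
          mul_le_mul_of_nonneg_left (sNorm_bound F x) (norm_nonneg _)
      _ ≤ ‖ev x‖ * (ε * ‖ev x‖) := by
          have h4 := mul_le_mul_of_nonneg_right hFle (norm_nonneg (ev x))
          exact mul_le_mul_of_nonneg_left h4 (norm_nonneg _)
      _ = ε * (x ⬝ᵥ x) := by rw [← norm_ev_sq]; ring
  have qE : ∀ v, |v ⬝ᵥ (E *ᵥ v)| ≤ ε * ((R *ᵥ v) ⬝ᵥ (R *ᵥ v)) := fun v => by
    have h1 : v ⬝ᵥ (E *ᵥ v) = (R *ᵥ v) ⬝ᵥ (F *ᵥ (R *ᵥ v)) := by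
      conv_lhs => rw [hERFR]
      rw [← Matrix.mulVec_mulVec, ← Matrix.mulVec_mulVec, dot_sym hRsym]
    rw [h1]
    exact qFabs (R *ᵥ v)
  have hMtME : Mt = M + E := by rw [hEdef]; abel
  have qMtlow : ∀ v, (1 - ε) * ((R *ᵥ v) ⬝ᵥ (R *ᵥ v)) ≤ v ⬝ᵥ (Mt *ᵥ v) := fun v => by
    have h1 : v ⬝ᵥ (Mt *ᵥ v) = v ⬝ᵥ (U *ᵥ v) + v ⬝ᵥ (E *ᵥ v) := by
      rw [hMtME, Matrix.add_mulVec, dotProduct_add, qM]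
    have h2 := (abs_le.mp (qE v)).1
    have h3 := qU v
    rw [h1, h3]
    linarith
  have dself : ∀ v : Fin n → ℝ, 0 ≤ v ⬝ᵥ v := fun v =>
    Finset.sum_nonneg fun i _ => mul_self_nonneg _
  -- kernels of Mt
  have kMtU : ∀ v, Mt *ᵥ v = 0 → U *ᵥ v = 0 := fun v hv => by
    have h0 : v ⬝ᵥ (Mt *ᵥ v) = 0 := by rw [hv, dotProduct_zero]
    have h1 := qMtlow v
    have h2 := dself (R *ᵥ v)
    have h3 : (R *ᵥ v) ⬝ᵥ (R *ᵥ v) = 0 := by nlinarith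
    exact (kUR v).mpr (dotProduct_self_eq_zero.mp h3)
  have kMttU : ∀ v, Mtᵀ *ᵥ v = 0 → U *ᵥ v = 0 := fun v hv => by
    have h0 : v ⬝ᵥ (Mt *ᵥ v) = 0 := by rw [← qT, hv, dotProduct_zero]
    have h1 := qMtlow v
    have h2 := dself (R *ᵥ v)
    have h3 : (R *ᵥ v) ⬝ᵥ (R *ᵥ v) = 0 := by nlinarith
    exact (kUR v).mpr (dotProduct_self_eq_zero.mp h3)
  have kUMt : ∀ v, U *ᵥ v = 0 → Mt *ᵥ v = 0 := fun v hv => by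
    rw [hMtME, Matrix.add_mulVec, (kMU v).mpr hv, (hEker v hv).1, add_zero]
  have kUMtt : ∀ v, U *ᵥ v = 0 → Mtᵀ *ᵥ v = 0 := fun v hv => by
    have : Mtᵀ = Mᵀ + Eᵀ := by rw [hMtME, Matrix.transpose_add]
    rw [this, Matrix.add_mulVec, (kMTU v).mpr hv, (hEker v hv).2, add_zero]
  -- range facts
  have rangeMMt : LinearMap.range M.mulVecLin = LinearMap.range Mtᵀ.mulVecLin := by
    apply le_antisymm
    · have := range_transpose_le_of_ker_le Mᵀ Mt
        (fun v hv => (kMTU v).mpr (kMtU v hv))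
      rwa [Matrix.transpose_transpose] at this
    · exact range_transpose_le_of_ker_le Mt Mᵀ
        (fun v hv => kUMt v ((kMTU v).mp hv)) |>.trans_eq
        (by rw [Matrix.transpose_transpose])
  have rangeMtR : LinearMap.range Mt.mulVecLin = LinearMap.range R.mulVecLin := by
    apply le_antisymm
    · have := range_transpose_le_of_ker_le Mtᵀ R
        (fun v hv => kUMtt v ((kUR v).mpr hv))
      rwa [Matrix.transpose_transpose, hRsym] at this
    · have := range_transpose_le_of_ker_le R Mtᵀ
        (fun v hv => (kUR v).mp (kMttU v hv))
      rwa [Matrix.transpose_transpose, hRsym] at this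
  -- the projection Q = Mtp * Mt equals P
  set Q : Matrix (Fin n) (Fin n) ℝ := Mtp * Mt with hQdef
  have hQsym : Qᵀ = Q := hMtp.2.2.2
  have hMtQ : Mt * Q = Mt := by rw [hQdef, ← mul_assoc]; exact hMtp.1
  have hQMtT : Q * Mtᵀ = Mtᵀ := by
    calc Q * Mtᵀ = Qᵀ * Mtᵀ := by rw [hQsym]
      _ = (Mt * Q)ᵀ := (Matrix.transpose_mul Mt Q).symm
      _ = Mtᵀ := by rw [hMtQ]
  have hrangeQ : LinearMap.range Q.mulVecLin = LinearMap.range Mtᵀ.mulVecLin := by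
    apply le_antisymm
    · rintro x ⟨v, rfl⟩
      refine ⟨Mtpᵀ *ᵥ v, ?_⟩
      rw [Matrix.mulVecLin_apply, Matrix.mulVecLin_apply, Matrix.mulVec_mulVec,
        ← Matrix.transpose_mul, hQsym]
    · rintro x ⟨v, rfl⟩
      refine ⟨Mtᵀ *ᵥ v, ?_⟩
      rw [Matrix.mulVecLin_apply, Matrix.mulVecLin_apply, Matrix.mulVec_mulVec, hQMtT]
  obtain ⟨hPsym, hPidem, hPrange⟩ := hP
  have hQidem : Q * Q = Q := by
    have h1 : Mt * (Mtp * Mt) = Mt := by rw [← mul_assoc]; exact hMtp.1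
    calc Q * Q = Mtp * (Mt * (Mtp * Mt)) := by rw [hQdef]; simp only [mul_assoc]
      _ = Q := by rw [h1, hQdef]
  have hranges : LinearMap.range P.mulVecLin = LinearMap.range Q.mulVecLin := by
    rw [hPrange, rangeMMt, ← hrangeQ]
  have fixIdem : ∀ A : Matrix (Fin n) (Fin n) ℝ, A * A = A →
      ∀ x ∈ LinearMap.range A.mulVecLin, A *ᵥ x = x := by
    rintro A hA x ⟨v, rfl⟩
    rw [Matrix.mulVecLin_apply, Matrix.mulVec_mulVec, hA]
  have hQP : Q * P = P := by
    apply eq_of_mulVec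
    intro v
    rw [← Matrix.mulVec_mulVec]
    exact fixIdem Q hQidem (P *ᵥ v) (hranges ▸ ⟨v, Matrix.mulVecLin_apply _ _⟩)
  have hPQ' : P * Q = Q := by
    apply eq_of_mulVec
    intro v
    rw [← Matrix.mulVec_mulVec]
    exact fixIdem P hPidem (Q *ᵥ v) (hranges.symm ▸ ⟨v, Matrix.mulVecLin_apply _ _⟩)
  have hPQ : P = Q := by
    have h1 := congrArg Matrix.transpose hQP
    rw [Matrix.transpose_mul, hPsym, hQsym] at h1
    rw [← hPQ', h1]
  have hfinal : P - Mtp * M = Mtp * E := by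
    rw [hPQ, hQdef, hEdef, Matrix.mul_sub]
  rw [hfinal]
  -- final bound on the sSup
  have uNormR : ∀ w, uNorm U w = ‖ev (R *ᵥ w)‖ := fun w => by
    rw [uNorm, qU, norm_ev_eq_sqrt]
  have ev_ne_zero : ∀ v : Fin n → ℝ, v ≠ 0 → ev v ≠ 0 := fun v hv h => by
    apply hv
    have := congrArg (WithLp.equiv 2 (Fin n → ℝ)) h
    simpa [ev] using this
  apply Real.sSup_le
  · rintro r ⟨x, hx, rfl⟩
    have hRx0 : R *ᵥ x ≠ 0 := fun h => hx ((kUR x).mpr h)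
    have hden : 0 < ‖ev (R *ᵥ x)‖ := norm_pos_iff.mpr (ev_ne_zero _ hRx0)
    set y : Fin n → ℝ := E *ᵥ x with hydef
    set z : Fin n → ℝ := Mtp *ᵥ y with hzdef
    have hzeq : (Mtp * E) *ᵥ x = z := by rw [hzdef, hydef, Matrix.mulVec_mulVec]
    have hyR : y = R *ᵥ (F *ᵥ (R *ᵥ x)) := by
      rw [hydef]
      conv_lhs => rw [hERFR]
      rw [← Matrix.mulVec_mulVec, ← Matrix.mulVec_mulVec]
    obtain ⟨w, hw⟩ : ∃ w, Mt *ᵥ w = y := by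
      have hmem : y ∈ LinearMap.range R.mulVecLin :=
        ⟨F *ᵥ (R *ᵥ x), by rw [Matrix.mulVecLin_apply, ← hyR]⟩
      rw [← rangeMtR] at hmem
      obtain ⟨w, hw⟩ := hmem
      exact ⟨w, by rw [← Matrix.mulVecLin_apply]; exact hw⟩
    have hMtz : Mt *ᵥ z = y := by
      rw [hzdef, ← hw, Matrix.mulVec_mulVec, Matrix.mulVec_mulVec, hMtp.1, hw]
    have hB : (1 - ε) * ((R *ᵥ z) ⬝ᵥ (R *ᵥ z)) ≤ ‖ev (R *ᵥ z)‖ * (ε * ‖ev (R *ᵥ x)‖) := by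
      have h1 := qMtlow z
      have h2 : z ⬝ᵥ (Mt *ᵥ z) = (R *ᵥ z) ⬝ᵥ (F *ᵥ (R *ᵥ x)) := by
        rw [hMtz, hyR, ← Matrix.mulVec_mulVec, dot_sym hRsym, Matrix.mulVec_mulVec]
      have h3 := dot_mulVec_le F (R *ᵥ z) (R *ᵥ x)
      have h4 : ‖ev (R *ᵥ z)‖ * (sNorm F * ‖ev (R *ᵥ x)‖)
          ≤ ‖ev (R *ᵥ z)‖ * (ε * ‖ev (R *ᵥ x)‖) :=
        mul_le_mul_of_nonneg_left
          (mul_le_mul_of_nonneg_right hFle (norm_nonneg _)) (norm_nonneg _)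
      calc (1 - ε) * ((R *ᵥ z) ⬝ᵥ (R *ᵥ z)) ≤ z ⬝ᵥ (Mt *ᵥ z) := h1
        _ = (R *ᵥ z) ⬝ᵥ (F *ᵥ (R *ᵥ x)) := h2
        _ ≤ ‖ev (R *ᵥ z)‖ * (sNorm F * ‖ev (R *ᵥ x)‖) := h3
        _ ≤ _ := h4
    have hnum : ‖ev (R *ᵥ z)‖ ≤ ε / (1 - ε) * ‖ev (R *ᵥ x)‖ := by
      rcases eq_or_lt_of_le (norm_nonneg (ev (R *ᵥ z))) with h0 | h0
      · rw [← h0]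
        positivity
      · have hsq : (R *ᵥ z) ⬝ᵥ (R *ᵥ z) = ‖ev (R *ᵥ z)‖ ^ 2 := (norm_ev_sq _).symm
        rw [hsq] at hB
        have h5 : ‖ev (R *ᵥ z)‖ * ((1 - ε) * ‖ev (R *ᵥ z)‖)
            ≤ ‖ev (R *ᵥ z)‖ * (ε * ‖ev (R *ᵥ x)‖) := by nlinarith
        have h6 := le_of_mul_le_mul_left h5 h0
        rw [div_mul_eq_mul_div, le_div_iff₀ h1ε]
        linarith
    rw [uNormR, uNormR, hzeq, div_le_iff₀ hden]
    calc ‖ev (R *ᵥ z)‖ ≤ ε / (1 - ε) * ‖ev (R *ᵥ x)‖ := hnum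
      _ = ε / (1 - ε) * ‖ev (R *ᵥ x)‖ := rfl
  · exact div_nonneg hε0 h1ε.le
end

section
/- Let Z, M, U, Ũ ∈ ℝ^{n×n} where U and Ũ are symmetric PSD with ker(Ũ) = ker(U) ⊆ ker(M) = ker(Mᵀ) = ker(Z) = ker(Zᵀ). If ‖I_{im(M)} − ZM‖_{U→U} ≤ ε and αU ⪯ Ũ ⪯ βU for some 0 < α ≤ β, then ‖I_{im(M)} − ZM‖_{Ũ→Ũ} ≤ ε·sqrt(β/α). -/
open Matrix

open scoped Matrix.Norms.L2Operator

section sqrtaux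
open scoped MatrixOrder

/-- Square root of a positive semidefinite matrix (via the CFC). -/
noncomputable def Matrix.PosSemidef.sqrt {n : ℕ} {U : Matrix (Fin n) (Fin n) ℝ}
    (_hU : U.PosSemidef) : Matrix (Fin n) (Fin n) ℝ :=
  CFC.sqrt U

theorem Matrix.PosSemidef.posSemidef_sqrt {n : ℕ} {U : Matrix (Fin n) (Fin n) ℝ}
    (hU : U.PosSemidef) : hU.sqrt.PosSemidef :=
  (CFC.sqrt_nonneg U).posSemidef

theorem Matrix.PosSemidef.sqrt_mul_self {n : ℕ} {U : Matrix (Fin n) (Fin n) ℝ}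
    (hU : U.PosSemidef) : hU.sqrt * hU.sqrt = U :=
  CFC.sqrt_mul_sqrt_self U hU.nonneg

end sqrtaux

section aux
variable {n : ℕ}

theorem factor_aux (f g : (Fin n → ℝ) →ₗ[ℝ] (Fin n → ℝ)) (hk : LinearMap.ker f ≤ LinearMap.ker g) :
    ∃ h : (Fin n → ℝ) →ₗ[ℝ] (Fin n → ℝ), g = h.comp f := by
  obtain ⟨h, hh⟩ := LinearMap.exists_extend
    (((LinearMap.ker f).liftQ g hk).comp f.quotKerEquivRange.symm.toLinearMap)
  refine ⟨h, LinearMap.ext fun x => ?_⟩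
  have h1 : f.quotKerEquivRange (Submodule.Quotient.mk x) = ⟨f x, LinearMap.mem_range_self f x⟩ := by
    rfl
  have h2 := congrArg (fun φ => φ (⟨f x, LinearMap.mem_range_self f x⟩ : LinearMap.range f)) hh
  simp only [LinearMap.comp_apply, Submodule.subtype_apply] at h2 ⊢
  rw [h2, ← h1, LinearEquiv.coe_toLinearMap, LinearEquiv.symm_apply_apply, Submodule.liftQ_apply]

theorem star_vec (x : Fin n → ℝ) : star x = x := by
  funext i; simp

theorem dot_nonneg' {U : Matrix (Fin n) (Fin n) ℝ} (hU : U.PosSemidef) (x : Fin n → ℝ) :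
    0 ≤ x ⬝ᵥ (U *ᵥ x) := by
  have := hU.dotProduct_mulVec_nonneg x
  rwa [_root_.star_vec] at this

theorem dot_pos {U : Matrix (Fin n) (Fin n) ℝ} (hU : U.PosSemidef) {x : Fin n → ℝ}
    (hx : U *ᵥ x ≠ 0) : 0 < x ⬝ᵥ (U *ᵥ x) := by
  rcases (dot_nonneg' hU x).lt_or_eq with h | h
  · exact h
  · exfalso
    apply hx
    rw [← hU.dotProduct_mulVec_zero_iff, _root_.star_vec, ← h]

theorem uNorm_nonneg' (U : Matrix (Fin n) (Fin n) ℝ) (x : Fin n → ℝ) : 0 ≤ uNorm U x :=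
  Real.sqrt_nonneg _

theorem uNorm_pos' {U : Matrix (Fin n) (Fin n) ℝ} (hU : U.PosSemidef) {x : Fin n → ℝ}
    (hx : U *ᵥ x ≠ 0) : 0 < uNorm U x :=
  Real.sqrt_pos.2 (dot_pos hU hx)

theorem sqrt_transpose {U : Matrix (Fin n) (Fin n) ℝ} (hU : U.PosSemidef) :
    (hU.sqrt)ᵀ = hU.sqrt := by
  have := hU.posSemidef_sqrt.1
  rwa [IsHermitian, conjTranspose_eq_transpose_of_trivial] at this

theorem dot_sqrt {U : Matrix (Fin n) (Fin n) ℝ} (hU : U.PosSemidef) (x : Fin n → ℝ) :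
    x ⬝ᵥ (U *ᵥ x) = (hU.sqrt *ᵥ x) ⬝ᵥ (hU.sqrt *ᵥ x) := by
  conv_lhs => rw [← hU.sqrt_mul_self, ← mulVec_mulVec, dotProduct_mulVec,
    ← mulVec_transpose, sqrt_transpose hU]

theorem sqrt_ker {U : Matrix (Fin n) (Fin n) ℝ} (hU : U.PosSemidef) (x : Fin n → ℝ) :
    hU.sqrt *ᵥ x = 0 ↔ U *ᵥ x = 0 := by
  constructor
  · intro h
    rw [← hU.sqrt_mul_self, ← mulVec_mulVec, h, mulVec_zero]
  · intro h
    have h2 : (hU.sqrt *ᵥ x) ⬝ᵥ (hU.sqrt *ᵥ x) = 0 := by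
      rw [← dot_sqrt hU, h, dotProduct_zero]
    exact dotProduct_self_eq_zero.mp h2

theorem uNorm_eq_norm {U : Matrix (Fin n) (Fin n) ℝ} (hU : U.PosSemidef) (x : Fin n → ℝ) :
    uNorm U x = ‖(EuclideanSpace.equiv (Fin n) ℝ).symm (hU.sqrt *ᵥ x)‖ := by
  rw [uNorm, dot_sqrt hU, EuclideanSpace.norm_eq]
  congr 1
  simp [dotProduct, Real.norm_eq_abs, sq_abs, pow_two]

theorem key_bound {U A : Matrix (Fin n) (Fin n) ℝ} (hU : U.PosSemidef)
    (hker : ∀ k, U *ᵥ k = 0 → A *ᵥ k = 0) :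
    ∃ C : ℝ, 0 ≤ C ∧ ∀ x, uNorm U (A *ᵥ x) ≤ C * uNorm U x := by
  obtain ⟨h, hh⟩ := factor_aux hU.sqrt.mulVecLin A.mulVecLin (fun k hk => by
    simp only [LinearMap.mem_ker, mulVecLin_apply] at *
    exact hker k ((sqrt_ker hU k).mp hk))
  set G := LinearMap.toMatrix' h with hGdef
  have hG : ∀ y, G *ᵥ y = h y := fun y => by
    rw [← Matrix.toLin'_apply, hGdef, Matrix.toLin'_toMatrix']
  have hfac : ∀ x, A *ᵥ x = G *ᵥ (hU.sqrt *ᵥ x) := fun x => by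
    have := congrArg (fun φ => φ x) hh
    simp only [LinearMap.comp_apply, mulVecLin_apply] at this
    rw [this, hG]
  refine ⟨‖hU.sqrt * G‖, norm_nonneg _, fun x => ?_⟩
  rw [uNorm_eq_norm hU, uNorm_eq_norm hU, hfac, mulVec_mulVec]
  exact (hU.sqrt * G).l2_opNorm_mulVec ((EuclideanSpace.equiv (Fin n) ℝ).symm (hU.sqrt *ᵥ x))

theorem dot_le_of_sub_psd {S T : Matrix (Fin n) (Fin n) ℝ} (h : (T - S).PosSemidef)
    (x : Fin n → ℝ) : x ⬝ᵥ (S *ᵥ x) ≤ x ⬝ᵥ (T *ᵥ x) := by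
  have := dot_nonneg' h x
  rw [sub_mulVec, dotProduct_sub] at this
  linarith

theorem dot_smul_eq (c : ℝ) (S : Matrix (Fin n) (Fin n) ℝ) (x : Fin n → ℝ) :
    x ⬝ᵥ ((c • S) *ᵥ x) = c * (x ⬝ᵥ (S *ᵥ x)) := by
  rw [smul_mulVec, dotProduct_smul, smul_eq_mul]

end aux

/-- Approximate pseudoinverse quality degrades by at most √(β/α) under a change
    of reference norm: if ‖I_{im(M)} − ZM‖_{U→U} ≤ ε and αU ⪯ Ũ ⪯ βU then
    ‖I_{im(M)} − ZM‖_{Ũ→Ũ} ≤ ε·√(β/α). -/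
theorem stmt16 {n : ℕ} (Z M U Ut : Matrix (Fin n) (Fin n) ℝ) (ε α β : ℝ)
    (hU : U.PosSemidef) (hUt : Ut.PosSemidef)
    (hker1 : LinearMap.ker Ut.mulVecLin = LinearMap.ker U.mulVecLin)
    (hker2 : LinearMap.ker U.mulVecLin ≤ LinearMap.ker M.mulVecLin)
    (hker3 : LinearMap.ker M.mulVecLin = LinearMap.ker Mᵀ.mulVecLin)
    (hker4 : LinearMap.ker M.mulVecLin = LinearMap.ker Z.mulVecLin)
    (hker5 : LinearMap.ker M.mulVecLin = LinearMap.ker Zᵀ.mulVecLin)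
    (hα : 0 < α) (hαβ : α ≤ β)
    (hlow : (Ut - α • U).PosSemidef) (hhigh : (β • U - Ut).PosSemidef)
    (P : Matrix (Fin n) (Fin n) ℝ) (hP : IsOrthProjOnto P M)
    (hnorm : uOpNorm U (P - Z * M) ≤ ε) :
    uOpNorm Ut (P - Z * M) ≤ ε * Real.sqrt (β / α) := by
  obtain ⟨hPt, hPP, hPrange⟩ := hP
  set A := P - Z * M with hAdef
  have hβ : 0 < β := lt_of_lt_of_le hα hαβ
  -- kernel of U lies inside kernel of A
  have hkerA : ∀ k, U *ᵥ k = 0 → A *ᵥ k = 0 := by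
    intro k hk
    have hmem : k ∈ LinearMap.ker U.mulVecLin := by
      simp [LinearMap.mem_ker, mulVecLin_apply, hk]
    have hkM : M *ᵥ k = 0 := by
      have := hker2 hmem
      simpa [LinearMap.mem_ker, mulVecLin_apply] using this
    have hkMt : k ᵥ* M = 0 := by
      have := hker3 ▸ hker2 hmem
      simpa [LinearMap.mem_ker, mulVecLin_apply] using this
    have hPk : P *ᵥ k = 0 := by
      have hmemP : P *ᵥ k ∈ LinearMap.range M.mulVecLin := by
        rw [← hPrange]
        exact ⟨k, rfl⟩
      obtain ⟨y, hy⟩ := hmemP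
      simp only [mulVecLin_apply] at hy
      have hdot : (P *ᵥ k) ⬝ᵥ (P *ᵥ k) = 0 := by
        have step1 : (P *ᵥ k) ⬝ᵥ (P *ᵥ k) = (P *ᵥ k) ⬝ᵥ k := by
          conv_lhs => rw [dotProduct_mulVec, ← mulVec_transpose, hPt, mulVec_mulVec, hPP]
        rw [step1, ← hy, dotProduct_comm, dotProduct_mulVec, hkMt, zero_dotProduct]
      exact dotProduct_self_eq_zero.mp hdot
    have hZM : (Z * M) *ᵥ k = 0 := by
      rw [← mulVec_mulVec, hkM, mulVec_zero]
    rw [hAdef, sub_mulVec, hPk, hZM, sub_zero]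
  obtain ⟨C, hC0, hCb⟩ := key_bound hU hkerA
  have hbdd : BddAbove {r : ℝ | ∃ x : Fin n → ℝ, U *ᵥ x ≠ 0 ∧ r = uNorm U (A *ᵥ x) / uNorm U x} := by
    refine ⟨C, fun r hr => ?_⟩
    obtain ⟨x, hx, rfl⟩ := hr
    rw [div_le_iff₀ (uNorm_pos' hU hx)]
    exact hCb x
  have hε : 0 ≤ ε := by
    refine le_trans (Real.sSup_nonneg fun r hr => ?_) hnorm
    obtain ⟨x, hx, rfl⟩ := hr
    exact div_nonneg (uNorm_nonneg' _ _) (uNorm_nonneg' _ _)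
  have hratio : ∀ x : Fin n → ℝ, U *ᵥ x ≠ 0 → uNorm U (A *ᵥ x) ≤ ε * uNorm U x := by
    intro x hx
    have hmem : uNorm U (A *ᵥ x) / uNorm U x ∈
        {r : ℝ | ∃ x : Fin n → ℝ, U *ᵥ x ≠ 0 ∧ r = uNorm U (A *ᵥ x) / uNorm U x} := ⟨x, hx, rfl⟩
    have h2 : uNorm U (A *ᵥ x) / uNorm U x ≤ ε := (le_csSup hbdd hmem).trans hnorm
    rw [div_le_iff₀ (uNorm_pos' hU hx)] at h2
    linarith
  have hlow' : ∀ y, Real.sqrt α * uNorm U y ≤ uNorm Ut y := by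
    intro y
    have h1 := dot_le_of_sub_psd hlow y
    rw [dot_smul_eq] at h1
    have := Real.sqrt_le_sqrt h1
    rwa [Real.sqrt_mul hα.le] at this
  have hhigh' : ∀ y, uNorm Ut y ≤ Real.sqrt β * uNorm U y := by
    intro y
    have h1 := dot_le_of_sub_psd hhigh y
    rw [dot_smul_eq] at h1
    have := Real.sqrt_le_sqrt h1
    rwa [Real.sqrt_mul hβ.le] at this
  have hsqrt_id : Real.sqrt (β / α) * Real.sqrt α = Real.sqrt β := by
    rw [← Real.sqrt_mul (div_nonneg hβ.le hα.le), div_mul_cancel₀ β hα.ne']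
  apply Real.sSup_le
  · rintro r ⟨x, hx, rfl⟩
    have hxU : U *ᵥ x ≠ 0 := by
      intro h0
      apply hx
      have : x ∈ LinearMap.ker U.mulVecLin := by
        simp [LinearMap.mem_ker, mulVecLin_apply, h0]
      rw [← hker1] at this
      simpa [LinearMap.mem_ker, mulVecLin_apply] using this
    have hdU : 0 < uNorm U x := uNorm_pos' hU hxU
    have hdUt : 0 < uNorm Ut x := uNorm_pos' hUt hx
    rw [div_le_iff₀ hdUt]
    have c1 : uNorm Ut (A *ᵥ x) ≤ Real.sqrt β * uNorm U (A *ᵥ x) := hhigh' _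
    have c2 : uNorm U (A *ᵥ x) ≤ ε * uNorm U x := hratio x hxU
    have c3 : Real.sqrt α * uNorm U x ≤ uNorm Ut x := hlow' x
    have hsb : (0:ℝ) ≤ Real.sqrt β := Real.sqrt_nonneg _
    have hsba : (0:ℝ) ≤ Real.sqrt (β / α) := Real.sqrt_nonneg _
    calc uNorm Ut (A *ᵥ x) ≤ Real.sqrt β * uNorm U (A *ᵥ x) := c1
      _ ≤ Real.sqrt β * (ε * uNorm U x) := by
          exact mul_le_mul_of_nonneg_left c2 hsb
      _ = ε * Real.sqrt (β / α) * (Real.sqrt α * uNorm U x) := by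
          rw [← hsqrt_id]; ring
      _ ≤ ε * Real.sqrt (β / α) * uNorm Ut x := by
          exact mul_le_mul_of_nonneg_left c3 (mul_nonneg hε hsba)
  · exact mul_nonneg hε (Real.sqrt_nonneg _)
end
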